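/- arXiv:2409.08120 — 3 statements merged into one kernel-verified Lean document; each statement's English description precedes it below -/
import Mathlib

section
/- Let {P_t} be a Markov semigroup on a compact metric space M with invariant probability measure μ satisfying: (a) ‖P_t g‖_∞ ≤ c1 e^{-c2 t} ‖g‖_∞ for all continuous g with ∫ g dμ = 0; (b) the Hölder-regularization bound |P_t g(x) - P_t g(y)| ≤ c3 ‖g‖_∞ t^{-κ} |x-y|^β for t ∈ (0,1], some κ > 1 and β ∈ (0,1). Then for every continuous f with ∫ f dμ = 0, the function ψ_f = ∫_0^∞ P_t f dt satisfies the Hölder estimate |ψ_f(x) - ψ_f(y)| ≤ C ‖f‖_∞ |x-y|^{β/κ} for all x, y ∈ M, with C depending only on c1, c2, c3, κ, β. -/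
/-!
Split the potential `ψ_f = ∫₀^∞ P_t f dt` at times `δ` and `1`. On `(0, δ]` the contraction
bound gives `|P_t f x - P_t f y| ≤ 2‖f‖`; on `(δ, 1]` the regularization bound
`t^{-κ} |x - y|^β` integrates to `δ^{1-κ} |x - y|^β / (κ - 1)`; on `(1, ∞)` writing
`P_t = P_1 P_{t-1}` combines regularization at time `1` with exponential ergodicity.
The choice `δ = |x - y|^{β/κ}` balances the first two terms. For `|x - y| ≥ 1` the bound
`‖ψ_f‖ ≤ c₁‖f‖/c₂` suffices.
-/

noncomputable section
open MeasureTheory Metric Set Filter Topology Real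

theorem integrableOn_Ioi_exp_neg_mul_sub {c : ℝ} (hc : 0 < c) (s : ℝ) :
    IntegrableOn (fun t => exp (-c * (t - s))) (Ioi s) := by
  simp_rw [show ∀ t, -c * (t - s) = -c * t + c * s by intro t; ring, exp_add]
  exact (integrableOn_exp_mul_Ioi (neg_neg_of_pos hc) s).mul_const _

theorem integral_Ioi_exp_neg_mul_sub {c : ℝ} (hc : 0 < c) (s : ℝ) :
    ∫ t in Ioi s, exp (-c * (t - s)) = 1 / c := by
  simp_rw [show ∀ t, -c * (t - s) = -c * t + c * s by intro t; ring, exp_add]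
  rw [integral_mul_const, integral_exp_mul_Ioi (neg_neg_of_pos hc), neg_div_neg_eq,
    div_mul_eq_mul_div, ← exp_add, show -c * s + c * s = 0 by ring, exp_zero]

section ExponentialDecay

variable {E : Type*} [NormedAddCommGroup E] {F : ℝ → E} {K c s : ℝ}

theorem integrableOn_Ioi_of_norm_le_mul_exp (hF : Continuous F) (hc : 0 < c)
    (hle : ∀ t ∈ Ioi s, ‖F t‖ ≤ K * exp (-c * (t - s))) : IntegrableOn F (Ioi s) :=
  ((integrableOn_Ioi_exp_neg_mul_sub hc s).const_mul K).mono' hF.aestronglyMeasurable.restrict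
    (ae_restrict_of_forall_mem measurableSet_Ioi hle)

theorem norm_integral_Ioi_le_of_norm_le_mul_exp [NormedSpace ℝ E] (hc : 0 < c)
    (hle : ∀ t ∈ Ioi s, ‖F t‖ ≤ K * exp (-c * (t - s))) : ‖∫ t in Ioi s, F t‖ ≤ K / c :=
  calc ‖∫ t in Ioi s, F t‖ ≤ ∫ t in Ioi s, K * exp (-c * (t - s)) :=
        norm_integral_le_of_norm_le ((integrableOn_Ioi_exp_neg_mul_sub hc s).const_mul K)
          (ae_restrict_of_forall_mem measurableSet_Ioi hle)
    _ = K / c := by rw [integral_const_mul, integral_Ioi_exp_neg_mul_sub hc, mul_one_div]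

end ExponentialDecay

theorem integral_Ioc_rpow_neg_le {δ b κ : ℝ} (hδ : 0 < δ) (hδb : δ ≤ b) (hκ : 1 < κ) :
    ∫ t in Ioc δ b, t ^ (-κ) ≤ δ ^ (1 - κ) / (κ - 1) := by
  have h0 : (0 : ℝ) ∉ uIcc δ b := notMem_uIcc_of_lt hδ (hδ.trans_le hδb)
  rw [← intervalIntegral.integral_of_le hδb, integral_rpow (Or.inr ⟨by linarith, h0⟩),
    show -κ + 1 = 1 - κ by ring, ← neg_div_neg_eq, neg_sub, neg_sub]
  exact div_le_div_of_nonneg_right (sub_le_self _ (rpow_nonneg (hδ.le.trans hδb) _))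
    (by linarith)

theorem abs_integral_Ioi_le_of_piecewise_bounds {g : ℝ → ℝ} {A B K c κ δ : ℝ}
    (hg : IntegrableOn g (Ioi 0)) (hδ : 0 < δ) (hδ1 : δ ≤ 1) (hκ : 1 < κ) (hc : 0 < c)
    (hB : 0 ≤ B) (hsmall : ∀ t ∈ Ioc 0 δ, |g t| ≤ A) (hmid : ∀ t ∈ Ioc δ 1, |g t| ≤ B * t ^ (-κ))
    (htail : ∀ t ∈ Ioi 1, |g t| ≤ K * exp (-c * (t - 1))) :
    |∫ t in Ioi 0, g t| ≤ A * δ + B * (δ ^ (1 - κ) / (κ - 1)) + K / c := by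
  have hsplit : ∫ t in Ioi 0, g t =
      (∫ t in Ioc 0 δ, g t) + (∫ t in Ioc δ 1, g t) + ∫ t in Ioi 1, g t := by
    rw [← Ioc_union_Ioi_eq_Ioi hδ.le, setIntegral_union (Ioc_disjoint_Ioi le_rfl)
        measurableSet_Ioi (hg.mono_set Ioc_subset_Ioi_self) (hg.mono_set (Ioi_subset_Ioi hδ.le)),
      ← Ioc_union_Ioi_eq_Ioi hδ1, setIntegral_union (Ioc_disjoint_Ioi le_rfl) measurableSet_Ioi
        (hg.mono_set (Ioc_subset_Ioi_self.trans (Ioi_subset_Ioi hδ.le)))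
        (hg.mono_set (Ioi_subset_Ioi (hδ.le.trans hδ1))), add_assoc]
  have hsmall' : ‖∫ t in Ioc 0 δ, g t‖ ≤ A * δ := by
    simpa [Real.volume_real_Ioc, hδ.le] using
      norm_setIntegral_le_of_norm_le_const (f := g) (μ := volume) measure_Ioc_lt_top hsmall
  have hmid' : ‖∫ t in Ioc δ 1, g t‖ ≤ B * (δ ^ (1 - κ) / (κ - 1)) :=
    calc ‖∫ t in Ioc δ 1, g t‖ ≤ ∫ t in Ioc δ 1, B * t ^ (-κ) :=
          norm_integral_le_of_norm_le
            (((intervalIntegral.intervalIntegrable_rpow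
              (Or.inr (notMem_uIcc_of_lt hδ one_pos))).1).const_mul B)
            (ae_restrict_of_forall_mem measurableSet_Ioc hmid)
      _ ≤ B * (δ ^ (1 - κ) / (κ - 1)) := by
          rw [integral_const_mul]
          exact mul_le_mul_of_nonneg_left (integral_Ioc_rpow_neg_le hδ hδ1 hκ) hB
  have htail' : ‖∫ t in Ioi 1, g t‖ ≤ K / c := norm_integral_Ioi_le_of_norm_le_mul_exp hc htail
  rw [hsplit, ← Real.norm_eq_abs]
  exact (norm_add₃_le).trans (by linarith)

theorem abs_integral_Ioi_le_mul_rpow_of_bounds {g : ℝ → ℝ} {A B K c κ β d : ℝ}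
    (hg : IntegrableOn g (Ioi 0)) (hκ : 1 < κ) (hβ : 0 < β) (hc : 0 < c) (hB : 0 ≤ B)
    (hK : 0 ≤ K) (hd0 : 0 < d) (hd1 : d < 1) (hbdd : ∀ t ∈ Ioi 0, |g t| ≤ A)
    (hmid : ∀ t ∈ Ioc 0 1, |g t| ≤ B * d ^ β * t ^ (-κ))
    (htail : ∀ t ∈ Ioi 1, |g t| ≤ K * d ^ β * exp (-c * (t - 1))) :
    |∫ t in Ioi 0, g t| ≤ (A + B / (κ - 1) + K / c) * d ^ (β / κ) := by
  set δ := d ^ (β / κ)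
  have hκ0 : 0 < κ := by linarith
  have hδ0 : 0 < δ := rpow_pos_of_pos hd0 _
  have hδ1 : δ ≤ 1 := rpow_le_one hd0.le hd1.le (by positivity)
  have hdβ : d ^ β = δ ^ κ := by rw [← rpow_mul hd0.le, div_mul_cancel₀ _ hκ0.ne']
  have hmid_term : B * d ^ β * (δ ^ (1 - κ) / (κ - 1)) = B / (κ - 1) * δ := by
    rw [hdβ, mul_assoc B, ← mul_div_assoc, ← rpow_add hδ0, add_sub_cancel, rpow_one]
    ring
  have htail_term : K * d ^ β / c ≤ K / c * δ := by
    rw [mul_div_right_comm]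
    exact mul_le_mul_of_nonneg_left
      (rpow_le_rpow_of_exponent_ge hd0 hd1.le (div_le_self hβ.le hκ.le)) (by positivity)
  calc |∫ t in Ioi 0, g t|
      ≤ A * δ + B * d ^ β * (δ ^ (1 - κ) / (κ - 1)) + K * d ^ β / c :=
        abs_integral_Ioi_le_of_piecewise_bounds hg hδ0 hδ1 hκ hc (by positivity)
          (fun t ht => hbdd t ht.1) (fun t ht => hmid t ⟨hδ0.trans ht.1, ht.2⟩) htail
    _ ≤ (A + B / (κ - 1) + K / c) * δ := by rw [hmid_term]; linarith

theorem abs_sub_apply_le_of_one_le {M : Type*} [MetricSpace M] [CompactSpace M]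
    {P : ℝ → C(M, ℝ) →L[ℝ] C(M, ℝ)} {f : C(M, ℝ)} {c₁ c₂ c₃ β : ℝ}
    (hsemi : ∀ s t : ℝ, 0 ≤ s → 0 ≤ t → ∀ f, P (s + t) f = P s (P t f))
    (hreg : ∀ g : C(M, ℝ), ∀ x y, |P 1 g x - P 1 g y| ≤ c₃ * ‖g‖ * dist x y ^ β)
    (hdecay : ∀ t, 0 ≤ t → ‖P t f‖ ≤ c₁ * exp (-c₂ * t) * ‖f‖)
    (hc₃ : 0 ≤ c₃) {t : ℝ} (ht : 1 ≤ t) (x y : M) :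
    |P t f x - P t f y| ≤ c₁ * c₃ * ‖f‖ * dist x y ^ β * exp (-c₂ * (t - 1)) := by
  have hsplit : P t f = P 1 (P (t - 1) f) := by
    rw [← hsemi 1 (t - 1) zero_le_one (by linarith), add_sub_cancel]
  calc |P t f x - P t f y| ≤ c₃ * ‖P (t - 1) f‖ * dist x y ^ β := hsplit ▸ hreg _ x y
    _ ≤ c₃ * (c₁ * exp (-c₂ * (t - 1)) * ‖f‖) * dist x y ^ β := by
        gcongr
        exact hdecay _ (by linarith)
    _ = c₁ * c₃ * ‖f‖ * dist x y ^ β * exp (-c₂ * (t - 1)) := by ring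

theorem ContinuousMap.integrable_apply {X M : Type*} [MeasurableSpace X] {μ : Measure X}
    [TopologicalSpace M] [CompactSpace M] {F : X → C(M, ℝ)} (hF : Integrable F μ) (x : M) :
    Integrable (fun t => F t x) μ :=
  (ContinuousMap.evalCLM ℝ x : C(M, ℝ) →L[ℝ] ℝ).integrable_comp hF

theorem ContinuousMap.integral_apply_sub {X M : Type*} [MeasurableSpace X] {μ : Measure X}
    [TopologicalSpace M] [CompactSpace M] {F : X → C(M, ℝ)} (hF : Integrable F μ) (x y : M) :
    (∫ t, F t ∂μ) x - (∫ t, F t ∂μ) y = ∫ t, (F t x - F t y) ∂μ := by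
  rw [ContinuousMap.integral_apply hF, ContinuousMap.integral_apply hF,
    ← integral_sub (ContinuousMap.integrable_apply hF x) (ContinuousMap.integrable_apply hF y)]

theorem abs_integral_apply_sub_le_of_dist_lt_one {M : Type*} [MetricSpace M] [CompactSpace M]
    {P : ℝ → C(M, ℝ) →L[ℝ] C(M, ℝ)} {f : C(M, ℝ)} {c₁ c₂ c₃ κ β : ℝ}
    (hsemi : ∀ s t : ℝ, 0 ≤ s → 0 ≤ t → ∀ f, P (s + t) f = P s (P t f))
    (hcontr : ∀ t : ℝ, 0 ≤ t → ‖P t f‖ ≤ ‖f‖)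
    (hreg : ∀ t ∈ Ioc (0 : ℝ) 1, ∀ g : C(M, ℝ), ∀ x y : M,
      |P t g x - P t g y| ≤ c₃ * ‖g‖ * t ^ (-κ) * dist x y ^ β)
    (hdecay : ∀ t, 0 ≤ t → ‖P t f‖ ≤ c₁ * exp (-c₂ * t) * ‖f‖)
    (hint : IntegrableOn (fun t => P t f) (Ioi 0)) (hc₁ : 0 ≤ c₁) (hc₂ : 0 < c₂) (hc₃ : 0 ≤ c₃)
    (hκ : 1 < κ) (hβ : 0 < β) {x y : M} (hxy0 : 0 < dist x y) (hxy1 : dist x y < 1) :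
    |(∫ t in Ioi 0, P t f) x - (∫ t in Ioi 0, P t f) y| ≤
      (2 + c₃ / (κ - 1) + c₁ * c₃ / c₂) * ‖f‖ * dist x y ^ (β / κ) := by
  have hreg_one : ∀ g : C(M, ℝ), ∀ x y, |P 1 g x - P 1 g y| ≤ c₃ * ‖g‖ * dist x y ^ β :=
    fun g x y => by simpa using hreg 1 ⟨one_pos, le_rfl⟩ g x y
  rw [ContinuousMap.integral_apply_sub hint]
  calc _ ≤ (2 * ‖f‖ + c₃ * ‖f‖ / (κ - 1) + c₁ * c₃ * ‖f‖ / c₂) * dist x y ^ (β / κ) :=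
        abs_integral_Ioi_le_mul_rpow_of_bounds
          ((ContinuousMap.integrable_apply hint x).sub (ContinuousMap.integrable_apply hint y))
          hκ hβ hc₂ (by positivity) (by positivity) hxy0 hxy1
          (fun t ht => ((P t f).dist_le_two_norm x y).trans (by gcongr; exact hcontr t ht.le))
          (fun t ht => (hreg t ht f x y).trans_eq (by ring))
          (fun t ht => abs_sub_apply_le_of_one_le hsemi hreg_one hdecay hc₃ ht.le x y)
    _ = (2 + c₃ / (κ - 1) + c₁ * c₃ / c₂) * ‖f‖ * dist x y ^ (β / κ) := by ring

theorem stmt_7_general {M : Type*} [MetricSpace M] [CompactSpace M]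
    [MeasurableSpace M]
    (μ : Measure M)
    (P : ℝ → C(M, ℝ) →L[ℝ] C(M, ℝ))
    -- Markov contraction semigroup, strongly continuous, with invariant measure μ
    (hsemi : ∀ s t : ℝ, 0 ≤ s → 0 ≤ t → ∀ f, P (s + t) f = P s (P t f))
    (hcontr : ∀ t : ℝ, 0 ≤ t → ∀ f : C(M, ℝ), ‖P t f‖ ≤ ‖f‖)
    (hcont : ∀ f, Continuous fun t : ℝ => P t f)
    -- constants
    (c₁ c₂ c₃ κ β : ℝ) (hc₁ : 0 < c₁) (hc₂ : 0 < c₂) (hc₃ : 0 < c₃)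
    (hκ : 1 < κ) (hβ : β ∈ Set.Ioo (0 : ℝ) 1)
    -- (a) uniform exponential ergodicity
    (herg : ∀ t : ℝ, 0 ≤ t → ∀ g : C(M, ℝ), (∫ x, g x ∂μ) = 0 →
        ‖P t g‖ ≤ c₁ * Real.exp (-c₂ * t) * ‖g‖)
    -- (b) Hölder regularization
    (hreg : ∀ t ∈ Set.Ioc (0 : ℝ) 1, ∀ g : C(M, ℝ), ∀ x y : M,
        |(P t g) x - (P t g) y| ≤ c₃ * ‖g‖ * t ^ (-κ) * dist x y ^ β) :
    ∃ C : ℝ, 0 < C ∧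
      ∀ f : C(M, ℝ), (∫ x, f x ∂μ) = 0 →
        IntegrableOn (fun t : ℝ => P t f) (Set.Ioi (0 : ℝ)) volume ∧
        (let ψ : C(M, ℝ) := ∫ t in Set.Ioi (0 : ℝ), P t f
         ∀ x y : M, |ψ x - ψ y| ≤ C * ‖f‖ * dist x y ^ (β / κ)) := by
  obtain ⟨C, hC0, hC_near, hC_far⟩ : ∃ C : ℝ, 0 < C ∧
      2 + c₃ / (κ - 1) + c₁ * c₃ / c₂ ≤ C ∧ 2 * c₁ / c₂ ≤ C := by
    have := sub_pos.2 hκ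
    exact ⟨2 + c₃ / (κ - 1) + c₁ * c₃ / c₂ + 2 * c₁ / c₂, by positivity,
      le_add_of_nonneg_right (by positivity), le_add_of_nonneg_left (by positivity)⟩
  refine ⟨C, hC0, fun f hf => ?_⟩
  have hdecay : ∀ t ∈ Ioi 0, ‖P t f‖ ≤ c₁ * ‖f‖ * exp (-c₂ * (t - 0)) := fun t ht => by
    simpa only [sub_zero, mul_right_comm] using herg t (le_of_lt ht) f hf
  have hint := integrableOn_Ioi_of_norm_le_mul_exp (hcont f) hc₂ hdecay
  refine ⟨hint, fun x y => ?_⟩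
  rcases (dist_nonneg : 0 ≤ dist x y).eq_or_lt with hxy | hd0
  · rw [dist_eq_zero.1 hxy.symm, sub_self, abs_zero]
    positivity
  rcases lt_or_ge (dist x y) 1 with hd1 | hd1
  · refine (abs_integral_apply_sub_le_of_dist_lt_one hsemi (fun t ht => hcontr t ht f) hreg
      (fun t ht => herg t ht f hf) hint hc₁.le hc₂ hc₃.le hκ hβ.1 hd0 hd1).trans ?_
    gcongr
  · calc _ ≤ 2 * ‖∫ t in Ioi 0, P t f‖ := ContinuousMap.dist_le_two_norm _ x y
      _ ≤ 2 * (c₁ * ‖f‖ / c₂) := by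
          gcongr
          exact norm_integral_Ioi_le_of_norm_le_mul_exp hc₂ hdecay
      _ = 2 * c₁ / c₂ * ‖f‖ * 1 := by ring
      _ ≤ C * ‖f‖ * dist x y ^ (β / κ) := by
          gcongr
          exact one_le_rpow hd1 (div_pos hβ.1 (by linarith)).le

theorem stmt_7 {M : Type*} [MetricSpace M] [CompactSpace M] [Nonempty M]
    [MeasurableSpace M] [BorelSpace M]
    (μ : Measure M) [IsProbabilityMeasure μ]
    (P : ℝ → C(M, ℝ) →L[ℝ] C(M, ℝ))
    -- Markov contraction semigroup, strongly continuous, with invariant measure μ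
    (hid : ∀ f, P 0 f = f)
    (hsemi : ∀ s t : ℝ, 0 ≤ s → 0 ≤ t → ∀ f, P (s + t) f = P s (P t f))
    (hcontr : ∀ t : ℝ, 0 ≤ t → ∀ f : C(M, ℝ), ‖P t f‖ ≤ ‖f‖)
    (hcont : ∀ f, Continuous fun t : ℝ => P t f)
    (hinv : ∀ t : ℝ, 0 ≤ t → ∀ f : C(M, ℝ), ∫ x, (P t f) x ∂μ = ∫ x, f x ∂μ)
    -- constants
    (c₁ c₂ c₃ κ β : ℝ) (hc₁ : 0 < c₁) (hc₂ : 0 < c₂) (hc₃ : 0 < c₃)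
    (hκ : 1 < κ) (hβ : β ∈ Set.Ioo (0 : ℝ) 1)
    -- (a) uniform exponential ergodicity
    (herg : ∀ t : ℝ, 0 ≤ t → ∀ g : C(M, ℝ), (∫ x, g x ∂μ) = 0 →
        ‖P t g‖ ≤ c₁ * Real.exp (-c₂ * t) * ‖g‖)
    -- (b) Hölder regularization
    (hreg : ∀ t ∈ Set.Ioc (0 : ℝ) 1, ∀ g : C(M, ℝ), ∀ x y : M,
        |(P t g) x - (P t g) y| ≤ c₃ * ‖g‖ * t ^ (-κ) * dist x y ^ β) :
    ∃ C : ℝ, 0 < C ∧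
      ∀ f : C(M, ℝ), (∫ x, f x ∂μ) = 0 →
        IntegrableOn (fun t : ℝ => P t f) (Set.Ioi (0 : ℝ)) volume ∧
        (let ψ : C(M, ℝ) := ∫ t in Set.Ioi (0 : ℝ), P t f
         ∀ x y : M, |ψ x - ψ y| ≤ C * ‖f‖ * dist x y ^ (β / κ)) :=
  stmt_7_general μ P hsemi hcontr hcont c₁ c₂ c₃ κ β hc₁ hc₂ hc₃ hκ hβ herg hreg
end
end

section
/- Let α ∈ (0,2) and let D ⊂ R^d be a bounded open set. Then there exists a constant C > 0, depending only on d, α and the diameter of D, such that for every f in the fractional Sobolev space W^{α/2,2}(R^d) that vanishes almost everywhere on R^d \ D, ∫_D f(x)^2 dx ≤ C ∬_{R^d × R^d} (f(x) - f(y))^2 |x-y|^{-(d+α)} dx dy. -/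
/-!
Take `D ⊆ ball 0 R` and a closed ball `A` of radius `R` centred at distance `3R` from the origin.
Since `f` vanishes on `A` and `‖x - y‖ < 5R` for `x ∈ ball 0 R`, `y ∈ A`, the part of the Gagliardo
double integral over `ball 0 R × A` alone is at least `(5R)^{-(d+α)} |A| ∫ f²`.
-/

noncomputable section
open MeasureTheory Metric Set

theorem dist_mem_Ioo_of_mem_ball_of_mem_closedBall {X : Type*} [PseudoMetricSpace X]
    {a b x y : X} {R : ℝ} (hab : dist a b = 3 * R) (hx : x ∈ ball a R) (hy : y ∈ closedBall b R) :
    dist x y ∈ Ioo R (5 * R) := by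
  rw [mem_ball'] at hx
  rw [mem_closedBall] at hy
  constructor
  · linarith [dist_triangle4 a x y b, dist_comm y b]
  · linarith [dist_triangle4 x a b y, dist_comm x a, dist_comm y b]

theorem mul_measureReal_mul_integral_sq_le_integral_sq_sub_mul_kernel {X : Type*}
    [MeasurableSpace X] {μ : Measure X} [SFinite μ] {f : X → ℝ} {K : X → X → ℝ}
    {A B : Set X} {c : ℝ} (hf : MemLp f 2 μ) (hA : MeasurableSet A) (hAμ : μ A ≠ ⊤)
    (hB : MeasurableSet B) (hfB : ∀ᵐ x ∂μ, x ∉ B → f x = 0) (hfA : ∀ᵐ y ∂μ, y ∈ A → f y = 0)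
    (hK : ∀ x y, 0 ≤ K x y) (hcK : ∀ x ∈ B, ∀ y ∈ A, c ≤ K x y)
    (hint : Integrable (fun p : X × X => (f p.1 - f p.2) ^ 2 * K p.1 p.2) (μ.prod μ)) :
    c * μ.real A * ∫ x, f x ^ 2 ∂μ ≤ ∫ p, (f p.1 - f p.2) ^ 2 * K p.1 p.2 ∂(μ.prod μ) := by
  have : IsFiniteMeasure (μ.restrict A) := isFiniteMeasure_restrict.2 hAμ
  have hfA' : ∀ᵐ p ∂(μ.prod μ), p.2 ∈ A → f p.2 = 0 := Measure.quasiMeasurePreserving_snd.ae hfA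
  have hlow_int : IntegrableOn (fun p : X × X => f p.1 ^ 2 * c) (B ×ˢ A) (μ.prod μ) := by
    rw [IntegrableOn, ← Measure.prod_restrict]
    exact hf.integrable_sq.restrict.mul_prod (integrable_const c)
  calc c * μ.real A * ∫ x, f x ^ 2 ∂μ
      = ∫ p in B ×ˢ A, f p.1 ^ 2 * c ∂(μ.prod μ) := by
        rw [setIntegral_prod_mul (fun x => f x ^ 2) (fun _ => c),
          setIntegral_eq_integral_of_ae_compl_eq_zero, setIntegral_const, smul_eq_mul]
        · ring
        · filter_upwards [hfB] with x hx hxB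
          simp [hx hxB]
    _ ≤ ∫ p in B ×ˢ A, (f p.1 - f p.2) ^ 2 * K p.1 p.2 ∂(μ.prod μ) := by
        refine setIntegral_mono_on_ae hlow_int hint.integrableOn (hB.prod hA) ?_
        filter_upwards [hfA'] with p hp ⟨hpB, hpA⟩
        rw [hp hpA, sub_zero]
        exact mul_le_mul_of_nonneg_left (hcK _ hpB _ hpA) (sq_nonneg _)
    _ ≤ ∫ p, (f p.1 - f p.2) ^ 2 * K p.1 p.2 ∂(μ.prod μ) :=
        setIntegral_le_integral hint (ae_of_all _ fun p => mul_nonneg (sq_nonneg _) (hK _ _))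

theorem stmt_9_general {d : ℕ} (hd : 0 < d) {α : ℝ} (hα : α ∈ Set.Ioo (0 : ℝ) 2)
    {D : Set (EuclideanSpace ℝ (Fin d))}
    (hbdd : Bornology.IsBounded D) :
    ∃ C : ℝ, 0 < C ∧
      ∀ f : EuclideanSpace ℝ (Fin d) → ℝ,
        -- f belongs to the fractional Sobolev space W^{α/2,2}(ℝ^d)
        MemLp f 2 volume →
        Integrable (fun p : EuclideanSpace ℝ (Fin d) × EuclideanSpace ℝ (Fin d) =>
          (f p.1 - f p.2) ^ 2 * ‖p.1 - p.2‖ ^ (-((d : ℝ) + α))) →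
        -- f vanishes a.e. outside D
        (∀ᵐ x : EuclideanSpace ℝ (Fin d), x ∉ D → f x = 0) →
        (∫ x in D, f x ^ 2)
          ≤ C * ∫ p : EuclideanSpace ℝ (Fin d) × EuclideanSpace ℝ (Fin d),
              (f p.1 - f p.2) ^ 2 * ‖p.1 - p.2‖ ^ (-((d : ℝ) + α)) := by
  obtain ⟨R, hR, hDR⟩ := hbdd.subset_ball_lt 0 0
  have : Nonempty (Fin d) := ⟨⟨0, hd⟩⟩
  obtain ⟨z, hz⟩ := exists_norm_eq (EuclideanSpace ℝ (Fin d)) (by positivity : 0 ≤ 3 * R)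
  have h0z : dist 0 z = 3 * R := by rw [dist_comm, dist_zero_right, hz]
  set s := (d : ℝ) + α
  have hs : 0 ≤ s := by positivity [hα.1.le]
  set k := (5 * R) ^ (-s) * volume.real (closedBall z R)
  have hk : 0 < k := mul_pos (by positivity)
    (ENNReal.toReal_pos (measure_closedBall_pos _ z hR).ne' measure_closedBall_lt_top.ne)
  refine ⟨1 / k, by positivity, fun f hf hint hvan => ?_⟩
  have hf_ball : ∀ᵐ x, x ∉ ball 0 R → f x = 0 :=
    hvan.mono fun x hx hxB => hx fun hxD => hxB (hDR hxD)
  have hf_closedBall : ∀ᵐ y, y ∈ closedBall z R → f y = 0 :=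
    hvan.mono fun y hy hyA => hy fun hyD =>
      hR.not_gt ((dist_mem_Ioo_of_mem_ball_of_mem_closedBall h0z (hDR hyD) hyA).1.trans_eq
        (dist_self y))
  have hkernel : ∀ x ∈ ball 0 R, ∀ y ∈ closedBall z R, (5 * R) ^ (-s) ≤ ‖x - y‖ ^ (-s) := by
    intro x hx y hy
    have hxy := dist_mem_Ioo_of_mem_ball_of_mem_closedBall h0z hx hy
    rw [← dist_eq_norm]
    exact Real.rpow_le_rpow_of_nonpos (hR.trans hxy.1) hxy.2.le (neg_nonpos.2 hs)
  rw [Measure.volume_eq_prod] at hint ⊢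
  have key := mul_measureReal_mul_integral_sq_le_integral_sq_sub_mul_kernel hf
    measurableSet_closedBall measure_closedBall_lt_top.ne measurableSet_ball hf_ball
    hf_closedBall (fun _ _ => by positivity) hkernel hint
  rw [one_div_mul_eq_div, le_div_iff₀ hk, mul_comm]
  exact (mul_le_mul_of_nonneg_left (setIntegral_le_integral hf.integrable_sq
    (ae_of_all _ fun x => sq_nonneg (f x))) hk.le).trans key

theorem stmt_9 {d : ℕ} (hd : 0 < d) {α : ℝ} (hα : α ∈ Set.Ioo (0 : ℝ) 2)
    {D : Set (EuclideanSpace ℝ (Fin d))} (hopen : IsOpen D)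
    (hbdd : Bornology.IsBounded D) :
    ∃ C : ℝ, 0 < C ∧
      ∀ f : EuclideanSpace ℝ (Fin d) → ℝ,
        -- f belongs to the fractional Sobolev space W^{α/2,2}(ℝ^d)
        MemLp f 2 volume →
        Integrable (fun p : EuclideanSpace ℝ (Fin d) × EuclideanSpace ℝ (Fin d) =>
          (f p.1 - f p.2) ^ 2 * ‖p.1 - p.2‖ ^ (-((d : ℝ) + α))) →
        -- f vanishes a.e. outside D
        (∀ᵐ x : EuclideanSpace ℝ (Fin d), x ∉ D → f x = 0) →
        (∫ x in D, f x ^ 2)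
          ≤ C * ∫ p : EuclideanSpace ℝ (Fin d) × EuclideanSpace ℝ (Fin d),
              (f p.1 - f p.2) ^ 2 * ‖p.1 - p.2‖ ^ (-((d : ℝ) + α)) :=
  stmt_9_general hd hα hbdd
end
end

section
/- Let α ∈ (0,1], and let K be as above (symmetric, 1-periodic in both variables, Λ^{-1} ≤ K ≤ Λ, C^1 in the second variable with bounded derivative). For ε ∈ (0,1) define F_ε(x) := p.v. ∫_{|z| ≤ 1/ε} z K(x,x+z) |z|^{-(d+α)} dz. Then F_ε is continuous and 1-periodic with ∫_{[0,1]^d} F_ε(x) dx = 0, and there exists c > 0 independent of ε such that ‖F_ε‖_∞ ≤ c (1 + ε^{α-1} 1_{α ∈ (0,1)} + |log ε| 1_{α = 1}). -/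
noncomputable section
open MeasureTheory Metric Set Filter Topology

/-- The lattice vector of `ℤ^d` inside `ℝ^d` corresponding to `m : Fin d → ℤ`. -/
def intVec {d : ℕ} (m : Fin d → ℤ) : EuclideanSpace ℝ (Fin d) :=
  (EuclideanSpace.equiv (Fin d) ℝ).symm fun i => (m i : ℝ)

/-- The unit cube `[0,1]^d`. -/
def unitCube (d : ℕ) : Set (EuclideanSpace ℝ (Fin d)) :=
  {x | ∀ i, x i ∈ Set.Icc (0 : ℝ) 1}

/-!
Averaging the integrand over `z ↦ -z` on the symmetric annuli `r < |z| ≤ 1/ε` replaces it by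
`(K(x,x+z) - K(x,x-z))/2 · z |z|^{-d-α}`, which is dominated by `M |z|^{2-d-α}` (mean value
theorem), integrable near `0`. So the principal value is the absolutely convergent integral of
this symmetrised kernel over the ball, and continuity follows by dominated convergence. The sup
bound splits the ball at `|z| = 1`: outside, the kernel is at most `Λ |z|^{1-d-α}`, and polar
coordinates reduce it to `∫_1^{1/ε} y^{-α} dy`, which is `≤ ε^{α-1}/(1-α)` or `= |log ε|`.
The mean vanishes by Fubini: by symmetry of `K`, `x ↦ K(x,x-z)` is a translate of the periodic
function `x ↦ K(x,x+z)`, so both have the same integral over the unit cube.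
-/

open Module Function
open scoped NNReal

theorem closedBall_sdiff_closedBall_zero {E : Type*} [SeminormedAddCommGroup E] (r R : ℝ) :
    closedBall (0 : E) R \ closedBall 0 r = {z | r < ‖z‖ ∧ ‖z‖ ≤ R} := by
  ext z; simp [and_comm]

section Radial

variable {E : Type*} [NormedAddCommGroup E] [NormedSpace ℝ E] [FiniteDimensional ℝ E]
  [MeasurableSpace E] [BorelSpace E] (μ : Measure E) [μ.IsAddHaarMeasure]

theorem integrableOn_ball_norm_rpow [Nontrivial E] {s : ℝ} (hs : -(finrank ℝ E : ℝ) < s)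
    (r : ℝ) : IntegrableOn (fun x : E => ‖x‖ ^ s) (ball 0 r) μ := by
  rcases le_or_gt r 0 with hr | hr
  · simp [ball_eq_empty.2 hr]
  rw [integrableOn_fun_norm_addHaar μ (f := fun y => y ^ s)]
  refine ((intervalIntegral.integrableOn_Ioo_rpow_iff (s := (finrank ℝ E : ℝ) - 1 + s) hr).2
    (by linarith)).congr_fun (fun y hy => ?_) measurableSet_Ioo
  rw [smul_eq_mul, ← Real.rpow_natCast, Nat.cast_sub finrank_pos, Nat.cast_one,
    ← Real.rpow_add hy.1]

theorem integrableOn_closedBall_norm_rpow [Nontrivial E] {s : ℝ}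
    (hs : -(finrank ℝ E : ℝ) < s) (r : ℝ) :
    IntegrableOn (fun x : E => ‖x‖ ^ s) (closedBall 0 r) μ :=
  (integrableOn_ball_norm_rpow μ hs (r + 1)).mono_set (closedBall_subset_ball (lt_add_one r))

theorem integrableOn_closedBall_sdiff_closedBall_norm_rpow (s : ℝ) {r : ℝ} (hr : 0 < r)
    (R : ℝ) : IntegrableOn (fun x : E => ‖x‖ ^ s) (closedBall 0 R \ closedBall 0 r) μ := by
  refine (ContinuousOn.integrableOn_compact ((isCompact_closedBall 0 R).diff isOpen_ball)
    fun z hz => ?_).mono_set (sdiff_subset_sdiff_right ball_subset_closedBall)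
  have hz : r ≤ ‖z‖ := by simpa using hz.2
  exact (continuous_norm.continuousAt.rpow_const (Or.inl (hr.trans_le hz).ne')).continuousWithinAt

theorem integral_closedBall_sdiff_closedBall_norm_rpow [Nontrivial E] {a b : ℝ} (ha : 0 ≤ a)
    (hab : a ≤ b) (t : ℝ) :
    ∫ z in closedBall (0 : E) b \ closedBall 0 a, ‖z‖ ^ t ∂μ
      = finrank ℝ E * μ.real (ball 0 1) * ∫ y in a..b, y ^ ((finrank ℝ E : ℝ) - 1 + t) := by
  have hannulus : closedBall (0 : E) b \ closedBall 0 a = (‖·‖) ⁻¹' Ioc a b := by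
    rw [closedBall_sdiff_closedBall_zero]; rfl
  have hradial : ∀ y ∈ Ioc a b,
      y ^ (finrank ℝ E - 1) • y ^ t = y ^ ((finrank ℝ E : ℝ) - 1 + t) := fun y hy => by
    rw [smul_eq_mul, ← Real.rpow_natCast, Nat.cast_sub finrank_pos, Nat.cast_one,
      ← Real.rpow_add (ha.trans_lt hy.1)]
  rw [hannulus, ← integral_indicator (measurableSet_Ioc.preimage measurable_norm)]
  change ∫ z, ((‖·‖) ⁻¹' Ioc a b).indicator ((fun y : ℝ => y ^ t) ∘ (‖·‖)) z ∂μ = _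
  simp_rw [indicator_comp_right]
  rw [integral_fun_norm_addHaar μ ((Ioc a b).indicator fun y => y ^ t), nsmul_eq_mul, smul_eq_mul]
  simp_rw [← indicator_smul_apply (Ioc a b) (fun y : ℝ => y ^ (finrank ℝ E - 1))]
  rw [setIntegral_indicator measurableSet_Ioc,
    inter_eq_right.2 (Ioc_subset_Ioi_self.trans (Ioi_subset_Ioi ha)),
    setIntegral_congr_fun measurableSet_Ioc hradial, intervalIntegral.integral_of_le hab, mul_assoc]

end Radial

-- At `α = 1` the factor `1 + (1 - α)⁻¹` is `1`, since `0⁻¹ = 0`.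
theorem intervalIntegral_rpow_neg_le {α ε : ℝ} (hα : α ∈ Ioc 0 1) (hε : ε ∈ Ioo 0 1) :
    ∫ y in (1 : ℝ)..1 / ε, y ^ (-α) ≤ (1 + (1 - α)⁻¹) *
      ((if α < 1 then ε ^ (α - 1) else 0) + if α = 1 then |Real.log ε| else 0) := by
  obtain ⟨hε0, hε1⟩ := hε
  have hR : 1 ≤ 1 / ε := by rw [le_div_iff₀ hε0]; linarith
  rcases hα.2.lt_or_eq with hα1 | rfl
  · rw [if_pos hα1, if_neg hα1.ne, add_zero, integral_rpow (Or.inl (by linarith [hα.2])),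
      Real.one_rpow, one_div, Real.inv_rpow hε0.le, ← Real.rpow_neg hε0.le]
    have hpos : 0 < 1 - α := by linarith
    have hεα := Real.rpow_nonneg hε0.le (α - 1)
    rw [show -(-α + 1) = α - 1 by ring, show -α + 1 = 1 - α by ring, div_le_iff₀ hpos]
    nlinarith [mul_nonneg hεα hpos.le, inv_mul_cancel₀ hpos.ne']
  · rw [if_neg (lt_irrefl 1), if_pos rfl, sub_self, inv_zero, add_zero, zero_add, one_mul]
    simp_rw [Real.rpow_neg_one]
    rw [integral_inv (by rw [uIcc_of_le hR]; exact fun h => absurd h.1 (by norm_num)), div_one,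
      one_div, Real.log_inv, abs_of_neg (Real.log_neg hε0 hε1)]

section Symmetrization

variable {E F : Type*} [NormedAddCommGroup E] [MeasurableSpace E] [BorelSpace E]
  [NormedAddCommGroup F] [NormedSpace ℝ F] (μ : Measure E)

theorem setIntegral_eq_setIntegral_half_add_comp_neg [μ.IsNegInvariant] {s : Set E}
    (hs : -s = s) {f : E → F} (hf : IntegrableOn f s μ) :
    ∫ z in s, f z ∂μ = ∫ z in s, (2⁻¹ : ℝ) • (f z + f (-z)) ∂μ := by
  have hneg := Measure.measurePreserving_neg μ
  have hemb := (MeasurableEquiv.neg E).measurableEmbedding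
  have hf' : IntegrableOn (fun z => f (-z)) s μ := by
    simpa [hs, comp_def] using (hneg.integrableOn_comp_preimage hemb).2 hf
  have hsymm : ∫ z in s, f (-z) ∂μ = ∫ z in s, f z ∂μ := by
    simpa [hs] using hneg.setIntegral_preimage_emb hemb f s
  rw [integral_smul, integral_add hf hf', hsymm, ← two_smul ℝ, smul_smul,
    inv_mul_cancel₀ two_ne_zero, one_smul]

theorem tendsto_setIntegral_sdiff_closedBall [NullSingletonClass μ] {s : Set E}
    (hs : MeasurableSet s) {f : E → F} (hf : IntegrableOn f s μ) :
    Tendsto (fun r => ∫ z in s \ closedBall 0 r, f z ∂μ) (𝓝[>] 0) (𝓝 (∫ z in s, f z ∂μ)) := by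
  simp_rw [← integral_indicator (hs.diff measurableSet_closedBall), ← integral_indicator hs]
  refine tendsto_integral_filter_of_dominated_convergence (fun z => ‖s.indicator f z‖)
    (.of_forall fun r => ((hf.mono_set sdiff_subset).integrable_indicator
      (hs.diff measurableSet_closedBall)).aestronglyMeasurable)
    (.of_forall fun r => ae_of_all _ (norm_indicator_le_of_subset sdiff_subset f))
    (hf.integrable_indicator hs).norm ?_
  filter_upwards [Measure.ae_ne μ 0] with z hz
  refine tendsto_const_nhds.congr' ?_
  filter_upwards [eventually_nhdsWithin_of_eventually_nhds
    (eventually_lt_nhds (norm_pos_iff.2 hz))] with r hr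
  have hzr : z ∉ closedBall 0 r := by simpa using hr
  by_cases hzs : z ∈ s
  · rw [indicator_of_mem hzs, indicator_of_mem (show z ∈ s \ closedBall 0 r from ⟨hzs, hzr⟩)]
  · rw [indicator_of_notMem hzs, indicator_of_notMem fun h => hzs h.1]

end Symmetrization

section SymmKernel

variable {E : Type*} [NormedAddCommGroup E] [NormedSpace ℝ E]

def symmKernel (K : E → E → ℝ) (β : ℝ) (x z : E) : E :=
  ((K x (x + z) - K x (x - z)) / 2 * ‖z‖ ^ (-β)) • z

variable {K : E → E → ℝ} {β : ℝ}

theorem norm_mul_rpow_neg_smul (c : ℝ) {z : E} (hz : z ≠ 0) :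
    ‖(c * ‖z‖ ^ (-β)) • z‖ = |c| * ‖z‖ ^ (1 - β) := by
  have hz : 0 < ‖z‖ := norm_pos_iff.2 hz
  rw [norm_smul, Real.norm_eq_abs, abs_mul, abs_of_nonneg (Real.rpow_nonneg hz.le _), mul_assoc,
    sub_eq_neg_add 1 β, Real.rpow_add hz, Real.rpow_one]

theorem norm_symmKernel (x z : E) :
    ‖symmKernel K β x z‖ = |K x (x + z) - K x (x - z)| / 2 * ‖z‖ ^ (1 - β) := by
  rcases eq_or_ne z 0 with rfl | hz
  · simp [symmKernel]
  rw [symmKernel, norm_mul_rpow_neg_smul _ hz, abs_div, abs_two]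

theorem norm_symmKernel_le_of_lipschitzWith {L : ℝ≥0} {x : E} (hK : LipschitzWith L (K x))
    (z : E) : ‖symmKernel K β x z‖ ≤ L * ‖z‖ ^ (2 - β) := by
  rcases eq_or_ne z 0 with rfl | hz
  · simp only [symmKernel, smul_zero, norm_zero]; positivity
  have hz : 0 < ‖z‖ := norm_pos_iff.2 hz
  have hdiff : |K x (x + z) - K x (x - z)| ≤ L * (2 * ‖z‖) := by
    have h := hK.dist_le_mul (x + z) (x - z)
    rwa [Real.dist_eq, dist_eq_norm, add_sub_sub_cancel, ← two_smul ℝ z, norm_smul,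
      Real.norm_two] at h
  calc ‖symmKernel K β x z‖ = |K x (x + z) - K x (x - z)| / 2 * ‖z‖ ^ (1 - β) :=
        norm_symmKernel x z
    _ ≤ L * (2 * ‖z‖) / 2 * ‖z‖ ^ (1 - β) := by gcongr
    _ = L * ‖z‖ ^ (2 - β) := by
      rw [show 2 - β = 1 + (1 - β) by ring, Real.rpow_add hz, Real.rpow_one]; ring

theorem norm_symmKernel_le_of_abs_le {Λ : ℝ} {x : E} (hK : ∀ y, |K x y| ≤ Λ) (z : E) :
    ‖symmKernel K β x z‖ ≤ Λ * ‖z‖ ^ (1 - β) := by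
  have hdiff : |K x (x + z) - K x (x - z)| ≤ 2 * Λ :=
    (abs_sub _ _).trans (by linarith [hK (x + z), hK (x - z)])
  rw [norm_symmKernel]
  have := Real.rpow_nonneg (norm_nonneg z) (1 - β)
  nlinarith

theorem half_add_comp_neg_eq_symmKernel (x z : E) :
    (2⁻¹ : ℝ) • ((K x (x + z) * ‖z‖ ^ (-β)) • z + (K x (x + -z) * ‖-z‖ ^ (-β)) • -z)
      = symmKernel K β x z := by
  rw [symmKernel, norm_neg, ← sub_eq_add_neg, smul_neg, ← sub_eq_add_neg, ← sub_smul, smul_smul]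
  congr 1; ring

end SymmKernel

section PrincipalValue

variable {E : Type*} [NormedAddCommGroup E] [NormedSpace ℝ E] [FiniteDimensional ℝ E]
  [MeasurableSpace E] [BorelSpace E] {K : E → E → ℝ} {β : ℝ}

theorem measurable_uncurry_symmKernel (hK : Continuous (uncurry K)) :
    Measurable (uncurry (symmKernel K β)) := by
  have hdiff : Continuous fun p : E × E => K p.1 (p.1 + p.2) - K p.1 (p.1 - p.2) := by fun_prop
  unfold symmKernel uncurry
  fun_prop

variable [Nontrivial E] (μ : Measure E) [μ.IsAddHaarMeasure]

theorem integrableOn_closedBall_symmKernel (hKc : Continuous (uncurry K)) {L : ℝ≥0} {x : E}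
    (hKx : LipschitzWith L (K x)) (hβ : β < finrank ℝ E + 2) (R : ℝ) :
    IntegrableOn (symmKernel K β x) (closedBall 0 R) μ :=
  ((integrableOn_closedBall_norm_rpow μ (by linarith) R).const_mul L).mono'
    (measurable_uncurry_symmKernel hKc).of_uncurry_left.aestronglyMeasurable
    (ae_of_all _ (norm_symmKernel_le_of_lipschitzWith hKx))

theorem tendsto_integral_annulus_symmKernel (hKc : Continuous (uncurry K)) {Λ : ℝ} {x : E}
    (hKb : ∀ y, |K x y| ≤ Λ) {L : ℝ≥0} (hKx : LipschitzWith L (K x))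
    (hβ : β < finrank ℝ E + 2) (R : ℝ) :
    Tendsto (fun r => ∫ z in {z : E | r < ‖z‖ ∧ ‖z‖ ≤ R}, (K x (x + z) * ‖z‖ ^ (-β)) • z ∂μ)
      (𝓝[>] 0) (𝓝 (∫ z in closedBall 0 R, symmKernel K β x z ∂μ)) := by
  refine (tendsto_setIntegral_sdiff_closedBall μ measurableSet_closedBall
    (integrableOn_closedBall_symmKernel μ hKc hKx hβ R)).congr' ?_
  filter_upwards [self_mem_nhdsWithin] with r (hr : 0 < r)
  have hsymm : -(closedBall (0 : E) R \ closedBall 0 r) = closedBall 0 R \ closedBall 0 r := by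
    ext z; simp
  have hint : IntegrableOn (fun z => (K x (x + z) * ‖z‖ ^ (-β)) • z)
      (closedBall 0 R \ closedBall 0 r) μ := by
    refine ((integrableOn_closedBall_sdiff_closedBall_norm_rpow μ (1 - β) hr R).const_mul Λ).mono'
      (by fun_prop : Measurable fun z => (K x (x + z) * ‖z‖ ^ (-β)) • z).aestronglyMeasurable
      (ae_restrict_of_forall_mem (measurableSet_closedBall.diff measurableSet_closedBall)
        fun z hz => ?_)
    have hz : z ≠ 0 := by rintro rfl; exact hz.2 (mem_closedBall_self hr.le)
    rw [norm_mul_rpow_neg_smul _ hz]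
    gcongr
    exact hKb _
  rw [← closedBall_sdiff_closedBall_zero,
    setIntegral_eq_setIntegral_half_add_comp_neg μ hsymm hint]
  exact (setIntegral_congr_fun (measurableSet_closedBall.diff measurableSet_closedBall)
    fun z _ => half_add_comp_neg_eq_symmKernel x z).symm

theorem continuous_integral_symmKernel (hKc : Continuous (uncurry K)) {L : ℝ≥0}
    (hKl : ∀ x, LipschitzWith L (K x)) (hβ : β < finrank ℝ E + 2) (R : ℝ) :
    Continuous fun x => ∫ z in closedBall 0 R, symmKernel K β x z ∂μ :=
  continuous_of_dominated
    (fun _ => (measurable_uncurry_symmKernel hKc).of_uncurry_left.aestronglyMeasurable)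
    (fun x => ae_of_all _ (norm_symmKernel_le_of_lipschitzWith (hKl x)))
    ((integrableOn_closedBall_norm_rpow μ (by linarith) R).const_mul L)
    (ae_of_all _ fun z => by unfold symmKernel; fun_prop)

theorem norm_integral_symmKernel_le (hKc : Continuous (uncurry K)) {Λ : ℝ} {x : E}
    (hKb : ∀ y, |K x y| ≤ Λ) {L : ℝ≥0} (hKx : LipschitzWith L (K x))
    (hβ : β < finrank ℝ E + 2) {R : ℝ} (hR : 1 ≤ R) :
    ‖∫ z in closedBall 0 R, symmKernel K β x z ∂μ‖
      ≤ L * ∫ z in closedBall (0 : E) 1, ‖z‖ ^ (2 - β) ∂μ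
        + Λ * (finrank ℝ E * μ.real (ball 0 1) *
            ∫ y in (1 : ℝ)..R, y ^ ((finrank ℝ E : ℝ) - β)) := by
  have hint : IntegrableOn (fun z => ‖symmKernel K β x z‖) (closedBall 0 R) μ :=
    (integrableOn_closedBall_symmKernel μ hKc hKx hβ R).norm
  have hsplit : ∫ z in closedBall 0 R, ‖symmKernel K β x z‖ ∂μ
      = ∫ z in closedBall 0 1, ‖symmKernel K β x z‖ ∂μ
        + ∫ z in closedBall 0 R \ closedBall 0 1, ‖symmKernel K β x z‖ ∂μ := by
    rw [setIntegral_sdiff measurableSet_closedBall hint (closedBall_subset_closedBall hR)]; ring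
  calc ‖∫ z in closedBall 0 R, symmKernel K β x z ∂μ‖
      ≤ ∫ z in closedBall 0 R, ‖symmKernel K β x z‖ ∂μ := norm_integral_le_integral_norm _
    _ ≤ ∫ z in closedBall 0 1, L * ‖z‖ ^ (2 - β) ∂μ
        + ∫ z in closedBall 0 R \ closedBall 0 1, Λ * ‖z‖ ^ (1 - β) ∂μ := by
      rw [hsplit]
      gcongr ?_ + ?_
      · exact setIntegral_mono (hint.mono_set (closedBall_subset_closedBall hR))
          ((integrableOn_closedBall_norm_rpow μ (by linarith) 1).const_mul L)
          (norm_symmKernel_le_of_lipschitzWith hKx)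
      · exact setIntegral_mono (hint.mono_set sdiff_subset)
          ((integrableOn_closedBall_sdiff_closedBall_norm_rpow μ _ one_pos R).const_mul Λ)
          (norm_symmKernel_le_of_abs_le hKb)
    _ = _ := by
      rw [integral_const_mul, integral_const_mul,
        integral_closedBall_sdiff_closedBall_norm_rpow μ zero_le_one hR,
        show (finrank ℝ E : ℝ) - 1 + (1 - β) = finrank ℝ E - β by ring]

theorem exists_norm_integral_symmKernel_le (hKc : Continuous (uncurry K)) {Λ : ℝ}
    (hKb : ∀ x y, |K x y| ≤ Λ) {L : ℝ≥0} (hKl : ∀ x, LipschitzWith L (K x)) {α : ℝ}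
    (hα : α ∈ Ioc 0 1) :
    ∃ c, 0 < c ∧ ∀ ε ∈ Ioo (0 : ℝ) 1, ∀ x,
      ‖∫ z in closedBall 0 (1 / ε), symmKernel K (finrank ℝ E + α) x z ∂μ‖
        ≤ c * (1 + (if α < 1 then ε ^ (α - 1) else 0) + if α = 1 then |Real.log ε| else 0) := by
  have hβ : (finrank ℝ E : ℝ) + α < finrank ℝ E + 2 := by linarith [hα.2]
  have hΛ : 0 ≤ Λ := (abs_nonneg _).trans (hKb 0 0)
  set A := L * ∫ z in closedBall (0 : E) 1, ‖z‖ ^ (2 - (finrank ℝ E + α)) ∂μ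
  set C := finrank ℝ E * μ.real (ball (0 : E) 1)
  set B := Λ * C * (1 + (1 - α)⁻¹)
  have hB : 0 ≤ B := by have := hα.2; positivity
  refine ⟨1 + |A| + B, by positivity, fun ε hε x => ?_⟩
  have hR : 1 ≤ 1 / ε := by rw [le_div_iff₀ hε.1]; linarith [hε.2]
  have hbound := norm_integral_symmKernel_le μ hKc (hKb x) (hKl x) hβ hR
  rw [sub_add_cancel_left] at hbound
  set rate := (if α < 1 then ε ^ (α - 1) else 0) + if α = 1 then |Real.log ε| else 0
  have hrate : 0 ≤ rate := by have := hε.1; positivity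
  calc _ ≤ A + Λ * (C * ∫ y in (1 : ℝ)..1 / ε, y ^ (-α)) := hbound
    _ ≤ |A| + Λ * (C * ((1 + (1 - α)⁻¹) * rate)) := by
      gcongr
      · exact le_abs_self A
      · exact intervalIntegral_rpow_neg_le hα hε
    _ = |A| + B * rate := by ring
    _ ≤ (1 + |A| + B) * (1 + rate) := by nlinarith [abs_nonneg A]
    _ = _ := by ring

end PrincipalValue

section UnitCube

variable {d : ℕ}

theorem unitCube_eq_parallelepiped :
    unitCube d = parallelepiped (EuclideanSpace.basisFun (Fin d) ℝ).toBasis := by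
  ext x; rw [parallelepiped_basis_eq]; simp [unitCube]

theorem isCompact_unitCube : IsCompact (unitCube d) :=
  unitCube_eq_parallelepiped ▸
    (EuclideanSpace.basisFun (Fin d) ℝ).toBasis.parallelepiped.isCompact

theorem exists_intVec_eq_of_mem_span {v : EuclideanSpace ℝ (Fin d)}
    (hv : v ∈ Submodule.span ℤ (range (EuclideanSpace.basisFun (Fin d) ℝ).toBasis)) :
    ∃ m, v = intVec m := by
  rw [Basis.mem_span_iff_repr_mem] at hv
  choose m hm using hv
  refine ⟨m, ?_⟩
  ext i
  simpa [intVec] using (hm i).symm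

theorem setIntegral_unitCube_comp_add_right {f : EuclideanSpace ℝ (Fin d) → ℝ}
    (hf : ∀ x m, f (x + intVec m) = f x) (a : EuclideanSpace ℝ (Fin d)) :
    ∫ x in unitCube d, f (x + a) = ∫ x in unitCube d, f x := by
  set b := (EuclideanSpace.basisFun (Fin d) ℝ).toBasis
  have hD := ZSpan.isAddFundamentalDomain b volume
  have hcube : unitCube d =ᵐ[volume] ZSpan.fundamentalDomain b :=
    unitCube_eq_parallelepiped ▸ (ZSpan.fundamentalDomain_ae_parallelepiped b volume).symm
  have hτ := measurePreserving_add_right volume a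
  have hDa : IsAddFundamentalDomain (Submodule.span ℤ (range b))
      ((· + a) ⁻¹' ZSpan.fundamentalDomain b) volume :=
    hD.preimage_of_equiv hτ.quasiMeasurePreserving (e := id) Function.bijective_id
      fun g x => add_assoc (g : EuclideanSpace ℝ (Fin d)) x a
  have hfa : ∀ (g : Submodule.span ℤ (range b)) x, f ((g +ᵥ x) + a) = f (x + a) := by
    rintro ⟨g, hg⟩ x
    obtain ⟨m, rfl⟩ := exists_intVec_eq_of_mem_span hg
    rw [Submodule.vadd_def, vadd_eq_add, add_comm (intVec m) x, add_right_comm x, hf]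
  have : VAddInvariantMeasure (Submodule.span ℤ (range b)) (EuclideanSpace ℝ (Fin d)) volume :=
    inferInstanceAs (VAddInvariantMeasure (Submodule.span ℤ (range b)).toAddSubgroup _ _)
  calc ∫ x in unitCube d, f (x + a)
      = ∫ x in ZSpan.fundamentalDomain b, f (x + a) := setIntegral_congr_set hcube
    _ = ∫ x in (· + a) ⁻¹' ZSpan.fundamentalDomain b, f (x + a) :=
        hD.setIntegral_eq hDa (f := fun x => f (x + a)) hfa
    _ = ∫ x in ZSpan.fundamentalDomain b, f x :=
        hτ.setIntegral_preimage_emb (MeasurableEquiv.addRight a).measurableEmbedding f _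
    _ = ∫ x in unitCube d, f x := (setIntegral_congr_set hcube).symm

variable {K : EuclideanSpace ℝ (Fin d) → EuclideanSpace ℝ (Fin d) → ℝ}

theorem symmKernel_add_intVec
    (hKper : ∀ x y m, K (x + intVec m) y = K x y ∧ K x (y + intVec m) = K x y)
    (β : ℝ) (x z : EuclideanSpace ℝ (Fin d)) (m : Fin d → ℤ) :
    symmKernel K β (x + intVec m) z = symmKernel K β x z := by
  have hK : ∀ x y, K (x + intVec m) (y + intVec m) = K x y :=
    fun x y => (hKper _ y m).2.trans (hKper x y m).1
  rw [symmKernel, symmKernel, add_right_comm x, add_sub_right_comm x, hK, hK]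

theorem integral_unitCube_symmKernel (hKc : Continuous (uncurry K))
    (hKsym : ∀ x y, K x y = K y x)
    (hKper : ∀ x y m, K (x + intVec m) y = K x y ∧ K x (y + intVec m) = K x y)
    (β : ℝ) (z : EuclideanSpace ℝ (Fin d)) :
    ∫ x in unitCube d, symmKernel K β x z = 0 := by
  have hint : ∀ g : EuclideanSpace ℝ (Fin d) → EuclideanSpace ℝ (Fin d), Continuous g →
      IntegrableOn (fun x => K x (g x)) (unitCube d) := fun g hg =>
    (by fun_prop : Continuous fun x => K x (g x)).continuousOn.integrableOn_compact
      isCompact_unitCube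
  have hshift : ∫ x in unitCube d, K x (x - z) = ∫ x in unitCube d, K x (x + z) := by
    have := setIntegral_unitCube_comp_add_right (f := fun y => K y (y + z))
      (fun x m => by rw [add_right_comm x, (hKper _ _ m).2, (hKper _ _ m).1]) (-z)
    simpa [← sub_eq_add_neg, hKsym _ (_ - z)] using this
  simp_rw [symmKernel]
  rw [integral_smul_const, integral_mul_const, integral_div,
    integral_sub (hint _ (by fun_prop)) (hint _ (by fun_prop)), hshift, sub_self,
    zero_div, zero_mul, zero_smul]

theorem integral_unitCube_integral_symmKernel [NeZero d] (hKc : Continuous (uncurry K))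
    (hKsym : ∀ x y, K x y = K y x)
    (hKper : ∀ x y m, K (x + intVec m) y = K x y ∧ K x (y + intVec m) = K x y)
    {L : ℝ≥0} (hKl : ∀ x, LipschitzWith L (K x)) {β : ℝ} (hβ : β < d + 2) (R : ℝ) :
    ∫ x in unitCube d, ∫ z in closedBall 0 R, symmKernel K β x z = 0 := by
  have : IsFiniteMeasure (volume.restrict (unitCube d)) :=
    isFiniteMeasure_restrict.2 isCompact_unitCube.measure_lt_top.ne
  have hint : Integrable (uncurry (symmKernel K β))
      ((volume.restrict (unitCube d)).prod (volume.restrict (closedBall 0 R))) :=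
    (((integrableOn_closedBall_norm_rpow volume (s := 2 - β)
      (by rw [finrank_euclideanSpace_fin]; linarith) R).const_mul L).comp_snd _).mono'
      (measurable_uncurry_symmKernel hKc).aestronglyMeasurable
      (ae_of_all _ fun p => norm_symmKernel_le_of_lipschitzWith (hKl p.1) p.2)
  rw [integral_integral_swap hint]
  simp [integral_unitCube_symmKernel hKc hKsym hKper]

end UnitCube

theorem stmt_11 {d : ℕ} (hd : 0 < d) {α : ℝ} (hα : α ∈ Set.Ioc (0 : ℝ) 1)
    {Λ : ℝ} (hΛ : 1 ≤ Λ)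
    (K : EuclideanSpace ℝ (Fin d) → EuclideanSpace ℝ (Fin d) → ℝ)
    (hKcont : Continuous (Function.uncurry K))
    (hKsym : ∀ x y, K x y = K y x)
    (hKper : ∀ x y (m : Fin d → ℤ),
        K (x + intVec m) y = K x y ∧ K x (y + intVec m) = K x y)
    (hKbdd : ∀ x y, Λ⁻¹ ≤ K x y ∧ K x y ≤ Λ)
    (hKC1 : ∀ x, ContDiff ℝ 1 (K x))
    (Mder : ℝ) (hKder : ∀ x y, ‖fderiv ℝ (K x) y‖ ≤ Mder) :
    ∃ c : ℝ, 0 < c ∧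
      ∀ ε ∈ Set.Ioo (0 : ℝ) 1,
        ∃ F : EuclideanSpace ℝ (Fin d) → EuclideanSpace ℝ (Fin d),
          -- `F = F_ε` is the principal value of `∫_{|z| ≤ 1/ε} z K(x,x+z) |z|^{-d-α} dz`
          (∀ x, Filter.Tendsto
            (fun r : ℝ => ∫ z in {z : EuclideanSpace ℝ (Fin d) | r < ‖z‖ ∧ ‖z‖ ≤ 1 / ε},
              (K x (x + z) * ‖z‖ ^ (-((d : ℝ) + α))) • z)
            (nhdsWithin 0 (Set.Ioi 0)) (nhds (F x))) ∧
          -- `F_ε` is continuous and `1`-periodic with mean zero,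
          Continuous F ∧
          (∀ x (m : Fin d → ℤ), F (x + intVec m) = F x) ∧
          (∫ x in unitCube d, F x) = 0 ∧
          -- and it satisfies the quantitative sup bound
          (∀ x, ‖F x‖ ≤ c * (1 + (if α < 1 then ε ^ (α - 1) else 0)
            + (if α = 1 then |Real.log ε| else 0))) := by
  have : NeZero d := ⟨hd.ne'⟩
  have hdim : finrank ℝ (EuclideanSpace ℝ (Fin d)) = d := finrank_euclideanSpace_fin
  have hβ : (d : ℝ) + α < finrank ℝ (EuclideanSpace ℝ (Fin d)) + 2 := by
    rw [hdim]; linarith [hα.2]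
  have hKb : ∀ x y, |K x y| ≤ Λ := fun x y => abs_le.2
    ⟨by linarith [(hKbdd x y).1, inv_pos.2 (zero_lt_one.trans_le hΛ)], (hKbdd x y).2⟩
  set L : ℝ≥0 := ⟨Mder, (norm_nonneg _).trans (hKder 0 0)⟩
  have hKl : ∀ x, LipschitzWith L (K x) := fun x =>
    lipschitzWith_of_nnnorm_fderiv_le ((hKC1 x).differentiable one_ne_zero) (hKder x)
  obtain ⟨c, hc, hbound⟩ := exists_norm_integral_symmKernel_le volume hKcont hKb hKl hα
  rw [hdim] at hbound
  exact ⟨c, hc, fun ε hε =>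
    ⟨fun x => ∫ z in closedBall 0 (1 / ε), symmKernel K (d + α) x z,
      fun x => tendsto_integral_annulus_symmKernel volume hKcont (hKb x) (hKl x) hβ _,
      continuous_integral_symmKernel volume hKcont hKl hβ _,
      fun x m => by simp only [symmKernel_add_intVec hKper],
      integral_unitCube_integral_symmKernel hKcont hKsym hKper hKl (by linarith [hα.2]) _,
      hbound ε hε⟩⟩
end
end
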